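/- arXiv:2006.00989 — 2 statements merged into one kernel-verified Lean document; each statement's English description precedes it below -/
import Mathlib

section
/- Let S be a set with a sign function to {+1,-1}, with disjoint subsets A and B, and let c be an element not in A or B that is comparable (via a total order) to all elements of A and B. For any cycle in S that is alternating (consecutive terms have opposite signs) and interleaving (it proceeds by two elements of A, then two of B, then two of A, etc.), the signed count of heterogeneous crossings over c equals the signed count of homogeneous crossings over c. Here a crossing over c occurs between consecutive terms of the cycle when c lies strictly between them in the order; it is homogeneous if both terms are in A or both in B, heterogeneous otherwise; its sign is the sign of the term that is less than c. -/
open scoped Classical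

/-- For an alternating, interleaving cycle in a signed, ordered set `S`
with disjoint subsets `A`, `B`, and an element `c ∉ A ∪ B`, the signed count of
heterogeneous crossings over `c` equals the signed count of homogeneous crossings. -/
theorem signed_count_heterogeneous_eq_homogeneous
    {S : Type*} [LinearOrder S] (sgn : S → ℤ)
    (hsgn : ∀ x, sgn x = 1 ∨ sgn x = -1)
    (A B : Set S) (hAB : Disjoint A B)
    (c : S) (hc : c ∉ A ∪ B)
    (n : ℕ) [NeZero n] (s : ZMod n → S)
    -- the cycle lies in A ∪ B
    (hmem : ∀ i, s i ∈ A ∪ B)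
    -- alternating: consecutive terms have opposite signs
    (halt : ∀ i, sgn (s (i + 1)) = - sgn (s i))
    -- interleaving: two elements of A, then two of B, cyclically
    (φ : ZMod n → ZMod 4)
    (hφ : ∀ i, φ (i + 1) = φ i + 1)
    (hA : ∀ i, s i ∈ A ↔ (φ i = 0 ∨ φ i = 1))
    (hB : ∀ i, s i ∈ B ↔ (φ i = 2 ∨ φ i = 3)) :
    -- heterogeneous crossings
    (∑ i : ZMod n,
      if (min (s i) (s (i + 1)) < c ∧ c < max (s i) (s (i + 1))) ∧
          ¬ ((s i ∈ A ∧ s (i + 1) ∈ A) ∨ (s i ∈ B ∧ s (i + 1) ∈ B)) then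
        (if s i < c then sgn (s i) else sgn (s (i + 1)))
      else 0) =
    -- homogeneous crossings
    (∑ i : ZMod n,
      if (min (s i) (s (i + 1)) < c ∧ c < max (s i) (s (i + 1))) ∧
          ((s i ∈ A ∧ s (i + 1) ∈ A) ∨ (s i ∈ B ∧ s (i + 1) ∈ B)) then
        (if s i < c then sgn (s i) else sgn (s (i + 1)))
      else 0) := by
  classical
  set t : ZMod n → ℤ := fun i => if s i < c then sgn (s i) else -sgn (s i) with htdef
  set a : ZMod n → ℤ := fun i => if s i ∈ A then 1 else -1 with hadef
  have hne : ∀ i, s i ≠ c := fun i h => hc (h ▸ hmem i)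
  -- key pointwise identity
  have key : ∀ i : ZMod n,
      2 * ((if (min (s i) (s (i + 1)) < c ∧ c < max (s i) (s (i + 1))) ∧
          ¬ ((s i ∈ A ∧ s (i + 1) ∈ A) ∨ (s i ∈ B ∧ s (i + 1) ∈ B)) then
        (if s i < c then sgn (s i) else sgn (s (i + 1)))
      else 0) -
        (if (min (s i) (s (i + 1)) < c ∧ c < max (s i) (s (i + 1))) ∧
          ((s i ∈ A ∧ s (i + 1) ∈ A) ∨ (s i ∈ B ∧ s (i + 1) ∈ B)) then
        (if s i < c then sgn (s i) else sgn (s (i + 1)))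
      else 0)) = -((t i + t (i + 1)) * (a i * a (i + 1))) := by
    intro i
    have hx := hne i
    have hy := hne (i + 1)
    have hh := halt i
    by_cases hcr : min (s i) (s (i + 1)) < c ∧ c < max (s i) (s (i + 1))
    · have hcases : (s i < c ∧ c < s (i + 1)) ∨ (s (i + 1) < c ∧ c < s i) := by
        rcases lt_or_gt_of_ne hx with h1 | h1 <;> rcases lt_or_gt_of_ne hy with h2 | h2
        · exact absurd hcr.2 (not_lt.mpr (max_le h1.le h2.le))
        · exact Or.inl ⟨h1, h2⟩
        · exact Or.inr ⟨h2, h1⟩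
        · exact absurd hcr.1 (not_lt.mpr (le_min h1.le h2.le))
      have hval : (if s i < c then sgn (s i) else sgn (s (i + 1))) = t i := by
        rcases hcases with ⟨h1, h2⟩ | ⟨h1, h2⟩
        · simp [htdef, h1]
        · simp [htdef, not_lt.mpr h2.le, hh]
      have htt : t (i + 1) = t i := by
        rcases hcases with ⟨h1, h2⟩ | ⟨h1, h2⟩
        · simp [htdef, h1, not_lt.mpr h2.le, hh]
        · simp [htdef, h1, not_lt.mpr h2.le, hh]
      by_cases hhom : (s i ∈ A ∧ s (i + 1) ∈ A) ∨ (s i ∈ B ∧ s (i + 1) ∈ B)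
      · have hp : a i * a (i + 1) = 1 := by
          rcases hhom with ⟨u, v⟩ | ⟨u, v⟩
          · simp [hadef, u, v]
          · have u' : s i ∉ A := fun h => Set.disjoint_left.mp hAB h u
            have v' : s (i + 1) ∉ A := fun h => Set.disjoint_left.mp hAB h v
            simp [hadef, u', v']
        have hno : ¬((min (s i) (s (i + 1)) < c ∧ c < max (s i) (s (i + 1))) ∧
            ¬((s i ∈ A ∧ s (i + 1) ∈ A) ∨ (s i ∈ B ∧ s (i + 1) ∈ B))) := fun h => h.2 hhom
        rw [hval, if_neg hno, if_pos ⟨hcr, hhom⟩, htt, hp]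
        ring
      · have hp : a i * a (i + 1) = -1 := by
          rcases hmem i with u | u <;> rcases hmem (i + 1) with v | v
          · exact absurd (Or.inl ⟨u, v⟩) hhom
          · have v' : s (i + 1) ∉ A := fun h => Set.disjoint_left.mp hAB h v
            simp [hadef, u, v']
          · have u' : s i ∉ A := fun h => Set.disjoint_left.mp hAB h u
            simp [hadef, u', v]
          · exact absurd (Or.inr ⟨u, v⟩) hhom
        have hno : ¬((min (s i) (s (i + 1)) < c ∧ c < max (s i) (s (i + 1))) ∧
            ((s i ∈ A ∧ s (i + 1) ∈ A) ∨ (s i ∈ B ∧ s (i + 1) ∈ B))) := fun h => hhom h.2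
        rw [hval, if_pos ⟨hcr, hhom⟩, if_neg hno, htt, hp]
        ring
    · have ht0 : t i + t (i + 1) = 0 := by
        rcases lt_or_gt_of_ne hx with h1 | h1 <;> rcases lt_or_gt_of_ne hy with h2 | h2
        · simp [htdef, h1, h2, hh]
        · exact absurd ⟨lt_of_le_of_lt (min_le_left _ _) h1,
            lt_of_lt_of_le h2 (le_max_right _ _)⟩ hcr
        · exact absurd ⟨lt_of_le_of_lt (min_le_right _ _) h2,
            lt_of_lt_of_le h1 (le_max_left _ _)⟩ hcr
        · simp [htdef, not_lt.mpr h1.le, not_lt.mpr h2.le, hh]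
      have h1 : ¬((min (s i) (s (i + 1)) < c ∧ c < max (s i) (s (i + 1))) ∧
          ¬((s i ∈ A ∧ s (i + 1) ∈ A) ∨ (s i ∈ B ∧ s (i + 1) ∈ B))) := fun h => hcr h.1
      have h2 : ¬((min (s i) (s (i + 1)) < c ∧ c < max (s i) (s (i + 1))) ∧
          ((s i ∈ A ∧ s (i + 1) ∈ A) ∨ (s i ∈ B ∧ s (i + 1) ∈ B))) := fun h => hcr h.1
      rw [if_neg h1, if_neg h2, ht0]
      ring
  -- interleaving gives a (i+1) = - a (i-1)
  have quad : ∀ x : ZMod 4, ((x + 1 = 0 ∨ x + 1 = 1) ↔ ¬(x - 1 = 0 ∨ x - 1 = 1)) := by decide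
  have haa : ∀ i : ZMod n, a (i + 1) = - a (i - 1) := by
    intro i
    have h1 : φ (i + 1) = φ i + 1 := hφ i
    have h2 : φ (i - 1) = φ i - 1 := by
      have := hφ (i - 1)
      rw [sub_add_cancel] at this
      rw [this]; ring
    have hmemA1 : s (i + 1) ∈ A ↔ (φ i + 1 = 0 ∨ φ i + 1 = 1) := by rw [hA, h1]
    have hmemA2 : s (i - 1) ∈ A ↔ (φ i - 1 = 0 ∨ φ i - 1 = 1) := by rw [hA, h2]
    by_cases hm : s (i - 1) ∈ A
    · have hm' : s (i + 1) ∉ A := by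
        rw [hmemA1, quad (φ i)]
        intro h; exact h (hmemA2.mp hm)
      simp [hadef, hm, hm']
    · have hm' : s (i + 1) ∈ A := by
        rw [hmemA1, quad (φ i)]
        intro h; exact hm (hmemA2.mpr h)
      simp [hadef, hm, hm']
  -- the telescoping sum vanishes
  have hsum : ∑ i : ZMod n, (t i + t (i + 1)) * (a i * a (i + 1)) = 0 := by
    have e : ∀ i : ZMod n, (t i + t (i + 1)) * (a i * a (i + 1)) =
        t i * (a i * a (i + 1)) + t (i + 1) * (a i * a (i + 1)) := fun i => by ring
    rw [Finset.sum_congr rfl (fun i _ => e i), Finset.sum_add_distrib]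
    have e2 : ∑ i : ZMod n, t (i + 1) * (a i * a (i + 1))
        = ∑ j : ZMod n, t j * (a (j - 1) * a j) := by
      apply Fintype.sum_equiv (Equiv.addRight (1 : ZMod n))
      intro i
      simp
    rw [e2, ← Finset.sum_add_distrib]
    apply Finset.sum_eq_zero
    intro i _
    rw [haa i]
    ring
  -- assemble
  have hfin : ∑ i : ZMod n,
      (2 * ((if (min (s i) (s (i + 1)) < c ∧ c < max (s i) (s (i + 1))) ∧
          ¬ ((s i ∈ A ∧ s (i + 1) ∈ A) ∨ (s i ∈ B ∧ s (i + 1) ∈ B)) then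
        (if s i < c then sgn (s i) else sgn (s (i + 1)))
      else 0) -
        (if (min (s i) (s (i + 1)) < c ∧ c < max (s i) (s (i + 1))) ∧
          ((s i ∈ A ∧ s (i + 1) ∈ A) ∨ (s i ∈ B ∧ s (i + 1) ∈ B)) then
        (if s i < c then sgn (s i) else sgn (s (i + 1)))
      else 0))) = 0 := by
    rw [Finset.sum_congr rfl (fun i _ => key i)]
    simp [Finset.sum_neg_distrib, hsum]
  rw [Finset.sum_congr rfl (fun i _ => (mul_sub (2:ℤ) _ _)), Finset.sum_sub_distrib,
    ← Finset.mul_sum, ← Finset.mul_sum] at hfin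
  omega
end

section
/- In the alternating interleaving setting, suppose the first crossing over c between consecutive terms s_i and s_{i+1} is homogeneous with sign ε, and the next crossing over c occurs k steps later (between s_{i+k} and s_{i+k+1}). Then: if k ≡ 1 or 3 (mod 4), the next crossing is heterogeneous with sign ε; and if k ≡ 0 or 2 (mod 4), the next crossing is homogeneous with sign −ε. -/
open scoped Classical

/-- In the alternating, interleaving setting, if a crossing over `c`
between `s i` and `s (i+1)` is homogeneous with sign `ε`, and the next crossing
occurs `k` steps later, then if `k ≡ 1, 3 (mod 4)` the next crossing is
heterogeneous with sign `ε`, while if `k ≡ 0, 2 (mod 4)` it is homogeneous with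
sign `-ε`. -/
theorem next_crossing_type_and_sign
    {S : Type*} [LinearOrder S] (sgn : S → ℤ)
    (hsgn : ∀ x, sgn x = 1 ∨ sgn x = -1)
    (A B : Set S) (hAB : Disjoint A B)
    (c : S) (hc : c ∉ A ∪ B)
    (s : ℕ → S)
    (hmem : ∀ i, s i ∈ A ∪ B)
    -- alternating
    (halt : ∀ i, sgn (s (i + 1)) = - sgn (s i))
    -- interleaving: two elements of A, then two of B, cyclically
    (φ : ℕ → ZMod 4)
    (hφ : ∀ i, φ (i + 1) = φ i + 1)
    (hA : ∀ i, s i ∈ A ↔ (φ i = 0 ∨ φ i = 1))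
    (hB : ∀ i, s i ∈ B ↔ (φ i = 2 ∨ φ i = 3))
    -- crossing, homogeneity and sign notions
    (crossing : ℕ → Prop)
    (hcrossing : ∀ i, crossing i ↔
      (min (s i) (s (i + 1)) < c ∧ c < max (s i) (s (i + 1))))
    (homog : ℕ → Prop)
    (hhomog : ∀ i, homog i ↔
      ((s i ∈ A ∧ s (i + 1) ∈ A) ∨ (s i ∈ B ∧ s (i + 1) ∈ B)))
    (signOf : ℕ → ℤ)
    (hsignOf : ∀ i, signOf i = if s i < c then sgn (s i) else sgn (s (i + 1)))
    (i k : ℕ) (hk : 1 ≤ k) (ε : ℤ)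
    -- the crossing between `s i` and `s (i+1)` is homogeneous with sign ε
    (h₁ : crossing i) (h₂ : homog i) (h₃ : signOf i = ε)
    -- the next crossing is k steps later
    (h₄ : crossing (i + k)) (h₅ : ∀ j, i < j → j < i + k → ¬ crossing j) :
    ((k % 4 = 1 ∨ k % 4 = 3) → ¬ homog (i + k) ∧ signOf (i + k) = ε) ∧
    ((k % 4 = 0 ∨ k % 4 = 2) → homog (i + k) ∧ signOf (i + k) = -ε) := by
  -- basic facts
  have hne : ∀ j, s j ≠ c := fun j h => hc (h ▸ hmem j)
  have htri : ∀ j, s j < c ∨ c < s j := fun j => lt_or_gt_of_ne (hne j)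
  have hcross' : ∀ j, crossing j ↔
      ((s j < c ∧ c < s (j+1)) ∨ (s (j+1) < c ∧ c < s j)) := by
    intro j
    rw [hcrossing]
    rcases le_total (s j) (s (j+1)) with h | h
    · rw [min_eq_left h, max_eq_right h]
      constructor
      · exact fun hx => Or.inl hx
      · rintro (hx | ⟨h1, h2⟩)
        · exact hx
        · exact absurd h1 (not_lt.2 (h2.trans_le h).le)
    · rw [min_eq_right h, max_eq_left h]
      constructor
      · exact fun hx => Or.inr hx
      · rintro (⟨h1, h2⟩ | hx)
        · exact absurd h1 (not_lt.2 (h2.trans_le h).le)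
        · exact hx
  have same : ∀ j, ¬ crossing j → (s j < c ↔ s (j+1) < c) := by
    intro j hj
    rw [hcross'] at hj
    rcases htri j with h1 | h1 <;> rcases htri (j+1) with h2 | h2
    · simp [h1, h2]
    · exact absurd (Or.inl ⟨h1, h2⟩) hj
    · exact absurd (Or.inr ⟨h2, h1⟩) hj
    · simp [not_lt.2 h1.le, not_lt.2 h2.le]
  -- all of s (i+1), ..., s (i+k) on the same side of c
  have hchain : ∀ m, 1 ≤ m → m ≤ k → (s (i+m) < c ↔ s (i+1) < c) := by
    intro m hm1 hmk
    induction m with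
    | zero => omega
    | succ m ih =>
      rcases Nat.lt_or_ge 1 (m+1) with h | h
      · have hm : 1 ≤ m := by omega
        have ihm := ih hm (by omega)
        have hnc : ¬ crossing (i+m) := h₅ (i+m) (by omega) (by omega)
        have := same (i+m) hnc
        rw [← Nat.add_assoc] at *
        exact this.symm.trans ihm
      · have : m = 0 := by omega
        subst this
        rfl
  -- sign recursion
  have hsgn_add : ∀ m, sgn (s (i + m)) = (-1)^m * sgn (s i) := by
    intro m
    induction m with
    | zero => simp
    | succ m ih =>
      rw [← Nat.add_assoc, halt, ih, pow_succ]
      ring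
  -- the sign of the crossing at i+k is (-1)^(k+1) * ε
  have hsig : signOf (i + k) = (-1)^(k+1) * ε := by
    rcases (hcross' i).1 h₁ with ⟨ha, hb⟩ | ⟨ha, hb⟩
    · -- s i < c < s (i+1)
      have hε : sgn (s i) = ε := by rw [hsignOf, if_pos ha] at h₃; exact h₃
      have h1 : ¬ s (i+1) < c := not_lt.2 hb.le
      have hk1 : ¬ s (i+k) < c := fun h => h1 ((hchain k hk le_rfl).1 h)
      have hk2 : s (i+k+1) < c := by
        rcases (hcross' (i+k)).1 h₄ with ⟨h3, _⟩ | ⟨h3, _⟩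
        · exact absurd h3 hk1
        · exact h3
      rw [hsignOf, if_neg hk1]
      have : i + k + 1 = i + (k+1) := by omega
      rw [this, hsgn_add, hε]
    · -- s (i+1) < c < s i
      have hε : sgn (s (i+1)) = ε := by
        rw [hsignOf, if_neg (not_lt.2 hb.le)] at h₃; exact h₃
      have hεi : sgn (s i) = -ε := by
        have := halt i
        rw [hε] at this
        linarith
      have hk1 : s (i+k) < c := (hchain k hk le_rfl).2 ha
      rw [hsignOf, if_pos hk1, hsgn_add, hεi, pow_succ]
      ring
  -- homogeneity
  have hφadd : ∀ m, φ (i + m) = φ i + m := by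
    intro m
    induction m with
    | zero => simp
    | succ m ih =>
      rw [← Nat.add_assoc, hφ, ih]
      push_cast
      ring
  have hhom' : ∀ j, homog j ↔ (φ j = 0 ∨ φ j = 2) := by
    intro j
    rw [hhomog, hA, hA, hB, hB, hφ]
    have key : ∀ x : ZMod 4,
        (((x = 0 ∨ x = 1) ∧ (x + 1 = 0 ∨ x + 1 = 1)) ∨
         ((x = 2 ∨ x = 3) ∧ (x + 1 = 2 ∨ x + 1 = 3))) ↔ (x = 0 ∨ x = 2) := by
      decide
    exact key (φ j)
  have hφi : φ i = 0 ∨ φ i = 2 := (hhom' i).1 h₂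
  have hcastk : ((k : ZMod 4)) = ((k % 4 : ℕ) : ZMod 4) := (ZMod.natCast_mod k 4).symm
  have hhomk : homog (i + k) ↔ (φ i + (k : ZMod 4) = 0 ∨ φ i + (k : ZMod 4) = 2) := by
    rw [hhom', hφadd]
  constructor
  · rintro hm
    have hodd : Odd k := by
      rcases hm with h | h <;> [skip; skip] <;>
        exact Nat.odd_iff.2 (by omega)
    have hkz : (k : ZMod 4) = 1 ∨ (k : ZMod 4) = 3 := by
      rcases hm with h | h
      · left; rw [hcastk, h]; decide
      · right; rw [hcastk, h]; decide
    constructor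
    · rw [hhomk]
      have key : ∀ x y : ZMod 4, (x = 0 ∨ x = 2) → (y = 1 ∨ y = 3) →
          ¬ (x + y = 0 ∨ x + y = 2) := by decide
      exact key _ _ hφi hkz
    · rw [hsig, Even.neg_one_pow (by simpa using hodd.add_one), one_mul]
  · rintro hm
    have heven : Even k := by
      rcases hm with h | h <;> exact Nat.even_iff.2 (by omega)
    have hkz : (k : ZMod 4) = 0 ∨ (k : ZMod 4) = 2 := by
      rcases hm with h | h
      · left; rw [hcastk, h]; decide
      · right; rw [hcastk, h]; decide
    constructor
    · rw [hhomk]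
      have key : ∀ x y : ZMod 4, (x = 0 ∨ x = 2) → (y = 0 ∨ y = 2) →
          (x + y = 0 ∨ x + y = 2) := by decide
      exact key _ _ hφi hkz
    · rw [hsig, Odd.neg_one_pow (by simpa using heven.add_one), neg_one_mul]
end
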